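/- For each integer d ≥ 0, the function E_d(s) is nondecreasing in s on (0,∞). -/

import Mathlib

/-!
For `s ≥ 0` the terms with `i > s` are exactly those that vanish when `(s - i) ^ d` is replaced by
the truncated power `(s - i)₊ ^ d`, so on `[0, ∞)` the function `E d` is the `d`-th backward
difference `∇ᵈ (x₊ᵈ / d!)`, `∇ f x = f x - f (x - 1)`; for `d ≥ 1` this is the Irwin–Hall
distribution function. Since `∇` commutes with differentiation and `(x₊ᵈ⁺¹ / (d+1)!)' = x₊ᵈ / d!`
for `d ≥ 1`, the derivative of `∇ᵈ⁺¹ (x₊ᵈ⁺¹ / (d+1)!)` is `∇ (∇ᵈ (x₊ᵈ / d!))`, which is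
nonnegative once `∇ᵈ (x₊ᵈ / d!)` is monotone. Monotonicity thus propagates from `∇ x₊ = min x₊ 1`.
-/

open Finset fwdDiff

/-- `E d s = ∑_{i=0}^{⌊s⌋} ((-1)^i / d!) * C(d,i) * (s - i)^d`. -/
noncomputable def E (d : ℕ) (s : ℝ) : ℝ :=
  ∑ i ∈ Finset.range (⌊s⌋.toNat + 1),
    ((-1 : ℝ) ^ i / d.factorial) * (d.choose i : ℝ) * (s - i) ^ d

theorem hasDerivAt_fwdDiff_iter {𝕜 F : Type*} [NontriviallyNormedField 𝕜] [NormedAddCommGroup F]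
    [NormedSpace 𝕜 F] {f f' : 𝕜 → F} (hf : ∀ x, HasDerivAt f (f' x) x) (h : 𝕜) (n : ℕ)
    (x : 𝕜) : HasDerivAt (Δ_[h] ^[n] f) (Δ_[h] ^[n] f' x) x := by
  induction n generalizing x with
  | zero => exact hf x
  | succ n ih =>
    rw [Function.iterate_succ_apply', Function.iterate_succ_apply']
    exact ((ih (x + h)).comp_add_const x h).sub (ih x)

noncomputable def truncPow (n : ℕ) (x : ℝ) : ℝ := max x 0 ^ n / n.factorial

theorem truncPow_of_nonpos {n : ℕ} (hn : n ≠ 0) {x : ℝ} (hx : x ≤ 0) : truncPow n x = 0 := by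
  simp [truncPow, max_eq_right hx, hn]

theorem truncPow_of_nonneg (n : ℕ) {x : ℝ} (hx : 0 ≤ x) : truncPow n x = x ^ n / n.factorial := by
  rw [truncPow, max_eq_left hx]

theorem hasDerivAt_truncPow_succ {n : ℕ} (hn : n ≠ 0) (x : ℝ) :
    HasDerivAt (truncPow (n + 1)) (truncPow n x) x := by
  have hneg : ∀ x ≤ 0, HasDerivWithinAt (truncPow (n + 1)) (truncPow n x) (Set.Iic 0) x :=
    fun x hx => by
      rw [truncPow_of_nonpos hn hx]
      exact (hasDerivWithinAt_const x _ 0).congr (fun y hy => truncPow_of_nonpos n.succ_ne_zero hy)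
        (truncPow_of_nonpos n.succ_ne_zero hx)
  have hpos : ∀ x ≥ 0, HasDerivWithinAt (truncPow (n + 1)) (truncPow n x) (Set.Ici 0) x :=
    fun x hx => by
      have hpoly : HasDerivAt (fun y : ℝ => y ^ (n + 1) / (n + 1).factorial)
          (x ^ n / n.factorial) x := by
        refine ((hasDerivAt_pow (n + 1) x).div_const _).congr_deriv ?_
        rw [Nat.factorial_succ]
        push_cast
        field_simp
      rw [truncPow_of_nonneg n hx]
      exact hpoly.hasDerivWithinAt.congr (fun y hy => truncPow_of_nonneg _ hy)
        (truncPow_of_nonneg _ hx)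
  rcases lt_trichotomy x 0 with hx | rfl | hx
  · exact (hneg x hx.le).hasDerivAt (Iic_mem_nhds hx)
  · simpa [Set.Iic_union_Ici] using (hneg 0 le_rfl).union (hpos 0 le_rfl)
  · exact (hpos x hx.le).hasDerivAt (Ici_mem_nhds hx)

-- `(-1) ^ d * Δ_[-1] ^[d]` is the `d`-th backward difference `∇ᵈ`.
noncomputable def irwinHall (d : ℕ) (s : ℝ) : ℝ := (-1) ^ d * Δ_[-1] ^[d] (truncPow d) s

theorem irwinHall_eq_sum (d : ℕ) (s : ℝ) :
    irwinHall d s = ∑ i ∈ range (d + 1),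
      ((-1 : ℝ) ^ i / d.factorial) * (d.choose i : ℝ) * max (s - i) 0 ^ d := by
  rw [irwinHall, fwdDiff_iter_eq_sum_shift, mul_sum]
  refine sum_congr rfl fun i hi => ?_
  have hid : i ≤ d := Nat.lt_succ_iff.1 (mem_range.1 hi)
  have hsign : (-1 : ℝ) ^ d * (-1) ^ (d - i) = (-1) ^ i := by
    rw [← pow_add, show d + (d - i) = i + 2 * (d - i) by omega, pow_add, pow_mul]
    norm_num
  rw [zsmul_eq_mul, truncPow, nsmul_eq_mul, show s + i * -1 = s - i by ring]
  push_cast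
  rw [← hsign]
  ring

theorem hasDerivAt_irwinHall_succ {d : ℕ} (hd : d ≠ 0) (s : ℝ) :
    HasDerivAt (irwinHall (d + 1)) (irwinHall d s - irwinHall d (s - 1)) s := by
  refine ((hasDerivAt_fwdDiff_iter (hasDerivAt_truncPow_succ hd) (-1) (d + 1) s).const_mul
    ((-1 : ℝ) ^ (d + 1))).congr_deriv ?_
  rw [Function.iterate_succ_apply', irwinHall, irwinHall, fwdDiff, ← sub_eq_add_neg]
  ring

theorem irwinHall_one_monotone : Monotone (irwinHall 1) := by
  have h (s : ℝ) : irwinHall 1 s = max s 0 - max (s - 1) 0 := by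
    simp [irwinHall_eq_sum, sum_range_succ, sub_eq_add_neg]
  intro a b hab
  simp only [h, max_def]
  split_ifs <;> linarith

theorem irwinHall_monotone (d : ℕ) : Monotone (irwinHall d) := by
  induction d with
  | zero => simp [Monotone, irwinHall, truncPow]
  | succ d ih =>
    rcases eq_or_ne d 0 with rfl | hd
    · exact irwinHall_one_monotone
    · exact monotone_of_hasDerivAt_nonneg (hasDerivAt_irwinHall_succ hd)
        fun s => sub_nonneg.2 (ih (by linarith))

theorem E_eq_irwinHall (d : ℕ) {s : ℝ} (hs : 0 ≤ s) : E d s = irwinHall d s := by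
  set F : ℕ → ℝ := fun i => ((-1 : ℝ) ^ i / d.factorial) * (d.choose i : ℝ) * max (s - i) 0 ^ d
  have hE : E d s = ∑ i ∈ range (⌊s⌋₊ + 1), F i := by
    rw [E, Int.floor_toNat]
    refine sum_congr rfl fun i hi => ?_
    have : (i : ℝ) ≤ s := (Nat.le_floor_iff hs).1 (Nat.lt_succ_iff.1 (mem_range.1 hi))
    simp only [F, max_eq_left (sub_nonneg.2 this)]
  have hF_floor : Function.support F ⊆ range (⌊s⌋₊ + 1) := by
    intro i hi
    by_contra hi'
    have hlt : ⌊s⌋₊ < i := by simpa using hi'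
    apply hi
    rcases eq_or_ne d 0 with rfl | hd
    · simp [F, Nat.choose_eq_zero_of_lt (Nat.zero_lt_of_lt hlt)]
    · have : s < i := (Nat.floor_lt hs).1 hlt
      simp [F, max_eq_right (by linarith : s - i ≤ 0), hd]
  have hF_choose : Function.support F ⊆ range (d + 1) := by
    intro i hi
    by_contra hi'
    apply hi
    simp [F, Nat.choose_eq_zero_of_lt (by simpa using hi' : d < i)]
  rw [irwinHall_eq_sum, hE, ← finsum_eq_sum_of_support_subset F hF_floor,
    finsum_eq_sum_of_support_subset F hF_choose]

theorem E_monotone (d : ℕ) :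
    ∀ s s' : ℝ, 0 < s → s ≤ s' → E d s ≤ E d s' := by
  intro s s' hs hss'
  rw [E_eq_irwinHall d hs.le, E_eq_irwinHall d (hs.le.trans hss')]
  exact irwinHall_monotone d hss'
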